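/- For any integer α ≥ 2, the generalized Bethe tree B(α² − α + 1, α) with three levels has exactly two main eigenvalues. -/

import Mathlib

open Matrix Finset

/-- `G` is a generalized Bethe tree `B(d₁, …, d_{k-1})` with `k` levels and root `r`:
it is a tree, each `dᵢ ≥ 2`, every vertex at distance `i - 1` from `r` has degree `dᵢ`
(for `1 ≤ i ≤ k - 1`), every vertex at distance `k - 1` from `r` has degree `1`, and
every vertex is at distance at most `k - 1` from `r`. -/
def IsGenBetheTree {V : Type*} (G : SimpleGraph V) (r : V) (k : ℕ) (d : ℕ → ℕ) : Prop :=
  G.IsTree ∧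
  (∀ i, 1 ≤ i → i ≤ k - 1 → 2 ≤ d i) ∧
  (∀ i, 1 ≤ i → i ≤ k - 1 → ∀ v, G.dist r v = i - 1 → (G.neighborSet v).ncard = d i) ∧
  (∀ v : V, G.dist r v = k - 1 → (G.neighborSet v).ncard = 1) ∧
  (∀ v : V, G.dist r v ≤ k - 1)

open scoped Classical in
/-- The adjacency matrix of `G` over `ℝ`. -/
noncomputable def adjMat {V : Type*} [Fintype V] (G : SimpleGraph V) : Matrix V V ℝ :=
  Matrix.of fun v w => if G.Adj v w then (1 : ℝ) else 0

/-- The set of main eigenvalues of `G`: those `λ` admitting a real eigenvector of the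
adjacency matrix whose entry sum is nonzero. -/
noncomputable def mainSpectrum {V : Type*} [Fintype V] (G : SimpleGraph V) : Set ℝ :=
  {lam : ℝ | ∃ x : V → ℝ, (adjMat G).mulVec x = lam • x ∧ ∑ v, x v ≠ 0}

/-!
The degree vector is `A 𝟙`. In `B(α² − α + 1, α)` the degrees of the neighbours of every vertex
add up to `α` times its degree, i.e. `A (A 𝟙) = α • A 𝟙`. Pairing this with an eigenvector `x` for
`λ` and using the symmetry of `A` gives `λ (λ − α) ∑ x = 0`, so every main eigenvalue is `0` or `α`.
Both occur, with eigenvectors `A 𝟙` and `A 𝟙 − α • 𝟙`, whose entry sums `2(n − 1)` and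
`2(n − 1) − α n` do not vanish.
-/

open SimpleGraph

namespace Matrix

variable {n R : Type*} [Fintype n] {A : Matrix n n R}

lemma IsSymm.mulVec_dotProduct [CommSemiring R] (hA : A.IsSymm) (x y : n → R) :
    A *ᵥ x ⬝ᵥ y = x ⬝ᵥ A *ᵥ y := by
  rw [dotProduct_mulVec, ← mulVec_transpose, hA.eq]

lemma IsSymm.eq_zero_or_eq_of_mulVec_mulVec_one [CommRing R] [NoZeroDivisors R]
    (hA : A.IsSymm) {c μ : R} (hc : A *ᵥ (A *ᵥ 1) = c • A *ᵥ 1) {x : n → R}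
    (hx : A *ᵥ x = μ • x) (hs : ∑ i, x i ≠ 0) : μ = 0 ∨ μ = c := by
  have h₁ : A *ᵥ 1 ⬝ᵥ x = μ * ∑ i, x i := by
    rw [hA.mulVec_dotProduct, hx, dotProduct_smul, one_dotProduct, smul_eq_mul]
  have h₂ : A *ᵥ (A *ᵥ 1) ⬝ᵥ x = μ * (A *ᵥ 1 ⬝ᵥ x) := by
    rw [hA.mulVec_dotProduct, hx, dotProduct_smul, smul_eq_mul]
  rw [hc, smul_dotProduct, smul_eq_mul, h₁] at h₂
  have : μ * (μ - c) * ∑ i, x i = 0 := by linear_combination -h₂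
  simpa [hs, sub_eq_zero] using this

end Matrix

lemma IsGenBetheTree.two_le {V : Type*} {G : SimpleGraph V} {r : V} {k : ℕ} {d : ℕ → ℕ}
    (hT : IsGenBetheTree G r k d) {i : ℕ} (hi : 1 ≤ i) (hik : i ≤ k - 1) : 2 ≤ d i :=
  hT.2.1 i hi hik

section

variable {V : Type*} [Fintype V] {G : SimpleGraph V}

lemma adjMat_eq_adjMatrix [DecidableRel G.Adj] : adjMat G = G.adjMatrix ℝ := by
  ext v w
  simp [adjMat]

lemma ncard_neighborSet_eq_degree [DecidableRel G.Adj] (v : V) :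
    (G.neighborSet v).ncard = G.degree v := by
  rw [Set.ncard_eq_toFinset_card', Set.toFinset_card, card_neighborSet_eq_degree]

/-- `hc` says that `G` is `c`-harmonic: its degree vector is an eigenvector for `c`. -/
theorem mainSpectrum_eq_pair [DecidableRel G.Adj] {c : ℝ}
    (hc : ∀ v, ∑ u ∈ G.neighborFinset v, (G.degree u : ℝ) = c * G.degree v)
    (h₀ : ∑ v, (G.degree v : ℝ) ≠ 0) (h₁ : ∑ v, (G.degree v : ℝ) ≠ c * Fintype.card V) :
    mainSpectrum G = {0, c} := by
  set A := adjMat G with hA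
  have hA1 : A *ᵥ 1 = fun v => (G.degree v : ℝ) := by
    ext v
    simp [hA, adjMat_eq_adjMatrix]
  have hAA1 : A *ᵥ (A *ᵥ 1) = c • A *ᵥ 1 := by
    ext v
    simp [hA, adjMat_eq_adjMatrix, adjMatrix_mulVec_apply, hc]
  apply Set.Subset.antisymm
  · rintro μ ⟨x, hx, hs⟩
    have hsymm : A.IsSymm := by rw [hA, adjMat_eq_adjMatrix]; exact isSymm_adjMatrix G
    exact hsymm.eq_zero_or_eq_of_mulVec_mulVec_one hAA1 hx hs
  · rintro μ (rfl | rfl)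
    · refine ⟨A *ᵥ 1 - c • 1, ?_, ?_⟩
      · rw [mulVec_sub, mulVec_smul, hAA1, sub_self, zero_smul]
      · simpa [hA1, Finset.sum_sub_distrib, mul_comm] using sub_ne_zero.2 h₁
    · exact ⟨A *ᵥ 1, hAA1, by simpa [hA1] using h₀⟩

namespace IsGenBetheTree

variable [DecidableRel G.Adj] {r : V} {k : ℕ} {d : ℕ → ℕ}

lemma degree_eq (hT : IsGenBetheTree G r k d) {i : ℕ} (hi : 1 ≤ i) (hik : i ≤ k - 1) {v : V}
    (hv : G.dist r v = i - 1) : G.degree v = d i := by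
  rw [← ncard_neighborSet_eq_degree, hT.2.2.1 i hi hik v hv]

lemma degree_eq_one (hT : IsGenBetheTree G r k d) {v : V} (hv : G.dist r v = k - 1) :
    G.degree v = 1 := by
  rw [← ncard_neighborSet_eq_degree, hT.2.2.2.1 v hv]

lemma sum_degree_neighborFinset (hT : IsGenBetheTree G r 3 d) (hd : d 1 + d 2 = d 2 ^ 2 + 1)
    (v : V) : ∑ u ∈ G.neighborFinset v, G.degree u = d 2 * G.degree v := by
  classical
  have hlevel (u : V) : G.dist r u ≤ 2 := hT.2.2.2.2 u
  have hnbr {u : V} (hu : u ∈ G.neighborFinset v) :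
      G.dist r v = G.dist r u + 1 ∨ G.dist r u = G.dist r v + 1 :=
    hT.1.dist_eq_dist_add_one_of_adj r ((mem_neighborFinset G v u).1 hu)
  have hmiddle (h : ∀ u ∈ G.neighborFinset v, G.dist r u = 1) :
      ∑ u ∈ G.neighborFinset v, G.degree u = d 2 * G.degree v := by
    rw [sum_const_nat fun u hu => hT.degree_eq (i := 2) (by norm_num) le_rfl (h u hu),
      card_neighborFinset_eq_degree, mul_comm]
  obtain hv | hv | hv : G.dist r v = 0 ∨ G.dist r v = 1 ∨ G.dist r v = 2 := by
    have := hlevel v; omega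
  · exact hmiddle fun u hu => by have := hnbr hu; omega
  · have hr : r ∈ G.neighborFinset v := by simpa [adj_comm] using hv
    have hleaf (u : V) (hu : u ∈ (G.neighborFinset v).erase r) : G.degree u = 1 := by
      obtain ⟨hur, hu⟩ := mem_erase.1 hu
      have : G.dist r u ≠ 0 := fun h => hur (hT.1.connected.dist_eq_zero_iff.1 h).symm
      exact hT.degree_eq_one (by have := hnbr hu; omega)
    rw [← sum_erase_add _ _ hr, sum_const_nat hleaf, card_erase_of_mem hr,
      card_neighborFinset_eq_degree, hT.degree_eq (i := 2) (by norm_num) le_rfl hv,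
      hT.degree_eq (i := 1) le_rfl (by norm_num) (by simp)]
    have : 1 ≤ d 2 := by have := hT.two_le (i := 2) (by norm_num) le_rfl; omega
    zify [this] at hd ⊢
    linear_combination hd
  · exact hmiddle fun u hu => by have := hnbr hu; have := hlevel u; omega

lemma mainSpectrum_eq (hT : IsGenBetheTree G r 3 d) (hd : d 1 + d 2 = d 2 ^ 2 + 1) :
    mainSpectrum G = {0, (d 2 : ℝ)} := by
  have hd2 : 2 ≤ d 2 := hT.two_le (by norm_num) le_rfl
  have hsum : ∑ v, G.degree v + 2 = 2 * Fintype.card V := by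
    rw [sum_degrees_eq_twice_card_edges, ← hT.1.card_edgeFinset]
    ring
  have hroot : 2 ≤ G.degree r :=
    hT.degree_eq (i := 1) le_rfl (by norm_num) dist_self ▸ hT.two_le le_rfl (by norm_num)
  have hpos : 2 ≤ ∑ v, G.degree v :=
    hroot.trans (single_le_sum (f := fun v => G.degree v) (fun _ _ => Nat.zero_le _) (mem_univ r))
  have hlt : ∑ v, G.degree v < d 2 * Fintype.card V := by nlinarith
  apply mainSpectrum_eq_pair
  · exact fun v => mod_cast hT.sum_degree_neighborFinset hd v
  · exact_mod_cast (by omega : ∑ v, G.degree v ≠ 0)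
  · exact_mod_cast hlt.ne

end IsGenBetheTree

end

theorem threeLevel_two_main_eigenvalues_general {V : Type*} [Fintype V] (G : SimpleGraph V)
    (r : V) (α : ℕ)
    (hT : IsGenBetheTree G r 3 (fun i => if i = 1 then α ^ 2 - α + 1 else α)) :
    (mainSpectrum G).Finite ∧ (mainSpectrum G).ncard = 2 := by
  classical
  have hα : 2 ≤ α := hT.two_le (i := 2) (by norm_num) le_rfl
  have hd : α ^ 2 - α + 1 + α = α ^ 2 + 1 := by
    have : α ≤ α ^ 2 := Nat.le_self_pow two_ne_zero α
    omega
  have hspec : mainSpectrum G = {0, (α : ℝ)} := hT.mainSpectrum_eq hd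
  rw [hspec]
  exact ⟨Set.toFinite _, Set.ncard_pair (by positivity)⟩

/-- For any integer `α ≥ 2`, the generalized Bethe tree
`B(α² - α + 1, α)` with three levels has exactly two main eigenvalues. -/
theorem threeLevel_two_main_eigenvalues {V : Type*} [Fintype V] (G : SimpleGraph V)
    (r : V) (α : ℕ) (hα : 2 ≤ α)
    (hT : IsGenBetheTree G r 3 (fun i => if i = 1 then α ^ 2 - α + 1 else α)) :
    (mainSpectrum G).Finite ∧ (mainSpectrum G).ncard = 2 :=
  threeLevel_two_main_eigenvalues_general G r α hT
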